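/- For all M ≤ N in ℕ, the intertwining relation L_M Λ_{M,N} = Λ_{M,N} L_N holds: for every function f : {0,…,N} → ℝ and every x ∈ {0,…,M}, L_M[Λ_{M,N}[f]](x) = Λ_{M,N}[L_N[f]](x). -/
import Mathlib

open Finset

/-- The Ehrenfest generator `L_N` acting on functions:
`L_N[f](x) = ((N-x)/2)(f(x+1)-f(x)) + (x/2)(f(x-1)-f(x))`. -/
noncomputable def ehrenfest (N : ℕ) (f : ℕ → ℝ) (x : ℕ) : ℝ :=
  (((N : ℝ) - (x : ℝ)) / 2) * (f (x + 1) - f x) + ((x : ℝ) / 2) * (f (x - 1) - f x)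

/-- The Markov kernel `Λ_{M,N}` from `{0,…,M}` to `{0,…,N}`:
`Λ_{M,N}(x,y) = 2^{M-N} C(N-M, y-x)` if `x ≤ y ≤ x + N - M`, and `0` otherwise. -/
noncomputable def lamMN (M N x y : ℕ) : ℝ :=
  if x ≤ y ∧ y ≤ x + (N - M) then
    (2 : ℝ) ^ ((M : ℤ) - (N : ℤ)) * (((N - M).choose (y - x)) : ℝ)
  else 0

lemma choose_cast (K j : ℕ) (hj : j < K) :
    (K.choose (j+1) : ℝ) * ((j:ℝ)+1) = (K.choose j : ℝ) * ((K:ℝ) - j) := by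
  rw [show (K:ℝ) - j = ((K - j : ℕ):ℝ) from by rw [Nat.cast_sub hj.le]]
  exact_mod_cast Nat.choose_succ_right_eq K j

lemma shiftA (K x : ℕ) (f : ℕ → ℝ) :
    ∑ j ∈ range (K+1), (K.choose j : ℝ) * ((K:ℝ) - j) * f (x+j+1)
      = ∑ j ∈ range (K+1), (K.choose j : ℝ) * (j:ℝ) * f (x+j) := by
  rw [Finset.sum_range_succ, Finset.sum_range_succ']
  simp only [sub_self, Nat.cast_zero, mul_zero, zero_mul, add_zero]
  refine Finset.sum_congr rfl fun j hj => ?_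
  rw [Finset.mem_range] at hj
  rw [show x + (j+1) = x + j + 1 from rfl]
  push_cast
  linear_combination (- f (x+j+1)) * choose_cast K j hj

lemma shiftB (K x : ℕ) (f : ℕ → ℝ) :
    ∑ j ∈ range (K+1), (K.choose j : ℝ) * (j:ℝ) * f (x+j-1)
      = ∑ j ∈ range (K+1), (K.choose j : ℝ) * ((K:ℝ) - j) * f (x+j) := by
  rw [Finset.sum_range_succ', Finset.sum_range_succ]
  simp only [sub_self, Nat.cast_zero, mul_zero, zero_mul, add_zero]
  refine Finset.sum_congr rfl fun j hj => ?_
  rw [Finset.mem_range] at hj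
  rw [show x + (j+1) - 1 = x + j from rfl]
  push_cast
  linear_combination f (x+j) * choose_cast K j hj

lemma key (K x : ℕ) (f : ℕ → ℝ) :
    ∑ j ∈ range (K+1), (K.choose j : ℝ) *
      (((K:ℝ) - j)/2 * (f (x+j) - f (x+j+1)) + (j:ℝ)/2 * (f (x+j) - f (x+j-1))) = 0 := by
  have hA := shiftA K x f
  have hB := shiftB K x f
  have hsplit : ∀ j ∈ range (K+1), (K.choose j : ℝ) *
      (((K:ℝ) - j)/2 * (f (x+j) - f (x+j+1)) + (j:ℝ)/2 * (f (x+j) - f (x+j-1)))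
      = (1/2) * ((K.choose j : ℝ) * ((K:ℝ)-j) * f (x+j)) + (1/2) * ((K.choose j : ℝ) * (j:ℝ) * f (x+j))
        - (1/2) * ((K.choose j : ℝ) * ((K:ℝ)-j) * f (x+j+1)) - (1/2) * ((K.choose j : ℝ) * (j:ℝ) * f (x+j-1)) :=
    fun j _ => by ring
  rw [Finset.sum_congr rfl hsplit, Finset.sum_sub_distrib, Finset.sum_sub_distrib,
      Finset.sum_add_distrib, ← Finset.mul_sum, ← Finset.mul_sum, ← Finset.mul_sum,
      ← Finset.mul_sum, hA, hB]
  ring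

lemma sumLam (M N : ℕ) (h : M ≤ N) (g : ℕ → ℝ) (u : ℕ) (hu : u ≤ M) :
    ∑ y ∈ range (N+1), lamMN M N u y * g y
      = (2:ℝ)^((M:ℤ)-(N:ℤ)) * ∑ j ∈ range (N-M+1), (((N-M).choose j) : ℝ) * g (u+j) := by
  have hsub : Icc u (u + (N-M)) ⊆ range (N+1) := by
    intro y hy
    rw [Finset.mem_Icc] at hy
    rw [Finset.mem_range]
    omega
  rw [← Finset.sum_subset hsub (fun y _ hy => ?_)]
  · rw [← Finset.Ico_add_one_right_eq_Icc, Finset.sum_Ico_eq_sum_range, show u + (N-M) + 1 - u = N-M+1 from by omega,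
      Finset.mul_sum]
    refine Finset.sum_congr rfl fun j hj => ?_
    rw [Finset.mem_range] at hj
    simp only [lamMN]
    rw [if_pos ⟨Nat.le_add_right u j, by omega⟩, Nat.add_sub_cancel_left]
    ring
  · rw [Finset.mem_Icc] at hy
    simp only [lamMN]
    rw [if_neg hy, zero_mul]

lemma core (M N x : ℕ) (h : M ≤ N) (f : ℕ → ℝ) :
    ((M:ℝ) - x)/2 * ((∑ j ∈ range (N-M+1), (((N-M).choose j) : ℝ) * f (x+1+j))
        - ∑ j ∈ range (N-M+1), (((N-M).choose j) : ℝ) * f (x+j))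
      + (x:ℝ)/2 * ((∑ j ∈ range (N-M+1), (((N-M).choose j) : ℝ) * f (x-1+j))
        - ∑ j ∈ range (N-M+1), (((N-M).choose j) : ℝ) * f (x+j))
    = ∑ j ∈ range (N-M+1), (((N-M).choose j) : ℝ) * ehrenfest N f (x+j) := by
  have hN : (N:ℝ) = (M:ℝ) + ((N-M : ℕ):ℝ) := by
    rw [Nat.cast_sub h]; ring
  have hkey := key (N-M) x f
  rw [← sub_eq_zero, ← hkey, ← Finset.sum_sub_distrib, ← Finset.sum_sub_distrib,
      Finset.mul_sum, Finset.mul_sum, ← Finset.sum_add_distrib, ← Finset.sum_sub_distrib]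
  refine Finset.sum_congr rfl fun j hj => ?_
  have hC : (x:ℝ) * f (x - 1 + j) = (x:ℝ) * f (x + j - 1) := by
    rcases Nat.eq_zero_or_pos x with hx0 | hx0
    · subst hx0; simp
    · rw [show x - 1 + j = x + j - 1 from by omega]
  rw [show x + 1 + j = x + j + 1 from by omega]
  simp only [ehrenfest]
  push_cast
  linear_combination ((((N-M).choose j) : ℝ)/2) * hC
    - ((((N-M).choose j) : ℝ)/2) * (f (x+j+1) - f (x+j)) * hN

/-- The intertwining relation `L_M Λ_{M,N} = Λ_{M,N} L_N` for `M ≤ N`. -/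
theorem ehrenfest_intertwining (M N : ℕ) (h : M ≤ N) (f : ℕ → ℝ) (x : ℕ) (hx : x ≤ M) :
    ehrenfest M (fun u => ∑ y ∈ Finset.range (N + 1), lamMN M N u y * f y) x =
      ∑ y ∈ Finset.range (N + 1), lamMN M N x y * ehrenfest N f y := by
  rw [sumLam M N h (ehrenfest N f) x hx, ← core M N x h f]
  simp only [ehrenfest]
  rw [sumLam M N h f x hx, sumLam M N h f (x-1) (le_trans (Nat.sub_le x 1) hx)]
  rcases Nat.lt_or_ge x M with hlt | hge
  · rw [sumLam M N h f (x+1) hlt]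
    ring
  · obtain rfl : x = M := le_antisymm hx hge
    ring
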